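/- Hom computation: for j ≤ j' in J, Hom_C(M^{j'}, M^j) ≅ k_{j'} as k_{j'}-vector spaces, via φ ↦ φ_{j'}(1). -/

import Mathlib

set_option linter.unusedVariables false

structure ChainObj {J : Type} [LinearOrder J] (k : J → Type) [∀ i, Field (k i)]
    (f : ∀ i j, i ≤ j → k i →+* k j) where
  V : J → Type
  [acg : ∀ i, AddCommGroup (V i)]
  [mod : ∀ i, Module (k i) (V i)]
  t : ∀ i j (h : i ≤ j), V i →ₛₗ[f i j h] V j
  t_id : ∀ i (x : V i), t i i le_rfl x = x
  t_comp : ∀ i j l (h₁ : i ≤ j) (h₂ : j ≤ l) (x : V i),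
    t j l h₂ (t i j h₁ x) = t i l (h₁.trans h₂) x

attribute [instance] ChainObj.acg ChainObj.mod

variable {J : Type} [LinearOrder J] {k : J → Type} [∀ i, Field (k i)]
  {f : ∀ i j, i ≤ j → k i →+* k j}

@[ext]
structure ChainHom (V W : ChainObj k f) where
  app : ∀ i, V.V i →ₗ[k i] W.V i
  comm : ∀ i j (h : i ≤ j) (x : V.V i), W.t i j h (app i x) = app j (V.t i j h x)

def ChainHom.comp {U V W : ChainObj k f} (g : ChainHom V W) (h : ChainHom U V) :
    ChainHom U W where
  app i := (g.app i).comp (h.app i)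
  comm i j hij x := by simp [g.comm, h.comm]

def ChainHom.id (V : ChainObj k f) : ChainHom V V where
  app i := LinearMap.id
  comm i j hij x := rfl

def ChainHom.zero (V W : ChainObj k f) : ChainHom V W where
  app i := 0
  comm i j hij x := by simp

/-- An object `V` is `α`-grounded if for every `β > α` the component `V β` is spanned
over `k β` by the image of the transition map from level `α`. -/
def IsGrounded (α : J) (V : ChainObj k f) : Prop :=
  ∀ β (h : α < β), Submodule.span (k β) (Set.range (V.t α β h.le)) = ⊤

/-- The component submodule of the representing object `M^j`: zero below `j`, everything
from `j` on. -/
def MjSub (k : J → Type) [∀ i, Field (k i)] (j i : J) : Submodule (k i) (k i) :=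
  if i < j then ⊥ else ⊤

theorem one_mem_MjSub {j i : J} (h : j ≤ i) : (1 : k i) ∈ MjSub k j i := by
  simp [MjSub, not_lt.mpr h]

/-- The object `M^j`, with `M^j_i = 0` for `i < j` and `M^j_i = k_i` for `i ≥ j`, the
transition maps being the field inclusions. -/
def Mj (hf_id : ∀ i (x : k i), f i i le_rfl x = x)
    (hf_comp : ∀ i j l (h₁ : i ≤ j) (h₂ : j ≤ l) (x : k i),
      f j l h₂ (f i j h₁ x) = f i l (h₁.trans h₂) x)
    (j : J) : ChainObj k f where
  V i := MjSub k j i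
  t i i' h :=
    { toFun := fun x => ⟨f i i' h x.1, by
        by_cases h' : i' < j
        · have hx : x.1 = 0 := by
            have hx2 := x.2
            simp only [MjSub, if_pos (lt_of_le_of_lt h h'), Submodule.mem_bot] at hx2
            exact hx2
          simp [MjSub, if_pos h', hx]
        · simp [MjSub, if_neg h']⟩
      map_add' := by intro a b; apply Subtype.ext; simp
      map_smul' := by intro c a; apply Subtype.ext; simp [Submodule.coe_smul] }
  t_id i x := by apply Subtype.ext; simp [hf_id]
  t_comp i j' l h₁ h₂ x := by apply Subtype.ext; simp [hf_comp]

/-! `M^j` is generated by `1 ∈ M^j_j`: a morphism `φ : M^j → W` satisfies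
`φ_i(x) = x • t_{j,i}(φ_j 1)` for `i ≥ j` and vanishes below `j`, and conversely every
`w ∈ W_j` defines such a morphism. So `φ ↦ φ_j(1)` identifies `Hom(M^j, W)` with `W_j`;
for `W = M^j` and `j ≤ j'` the target `M^j_{j'}` is all of `k_{j'}`. -/

theorem MjSub_eq_top {j i : J} (h : j ≤ i) : MjSub k j i = ⊤ := by
  simp [MjSub, not_lt.mpr h]

theorem eq_zero_of_mem_MjSub {j i : J} (h : i < j) {x : k i} (hx : x ∈ MjSub k j i) :
    x = 0 := by
  simpa [MjSub, h] using hx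

namespace Mj

variable {hf_id : ∀ i (x : k i), f i i le_rfl x = x}
  {hf_comp : ∀ i j l (h₁ : i ≤ j) (h₂ : j ≤ l) (x : k i),
    f j l h₂ (f i j h₁ x) = f i l (h₁.trans h₂) x}
  {j : J}

abbrev one : (Mj hf_id hf_comp j).V j := ⟨1, one_mem_MjSub le_rfl⟩

section val

variable {i : J}

@[simp] theorem val_zero : (0 : (Mj hf_id hf_comp j).V i).1 = 0 := rfl

@[simp] theorem val_add (a b : (Mj hf_id hf_comp j).V i) : (a + b).1 = a.1 + b.1 := rfl

@[simp] theorem val_smul (c : k i) (a : (Mj hf_id hf_comp j).V i) : (c • a).1 = c * a.1 := rfl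

@[simp] theorem val_t {i' : J} (h : i ≤ i') (a : (Mj hf_id hf_comp j).V i) :
    ((Mj hf_id hf_comp j).t i i' h a).1 = f i i' h a.1 := rfl

end val

theorem eq_zero_of_lt {i : J} (h : i < j) (x : (Mj hf_id hf_comp j).V i) : x = 0 :=
  Subtype.ext (eq_zero_of_mem_MjSub h x.2)

theorem eq_smul_t_one {i : J} (h : j ≤ i) (x : (Mj hf_id hf_comp j).V i) :
    x = x.1 • (Mj hf_id hf_comp j).t j i h one :=
  Subtype.ext (by simp)

theorem app_eq_smul_t {W : ChainObj k f} (φ : ChainHom (Mj hf_id hf_comp j) W) {i : J}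
    (h : j ≤ i) (x : (Mj hf_id hf_comp j).V i) :
    φ.app i x = x.1 • W.t j i h (φ.app j one) := by
  rw [φ.comm, ← map_smul, ← eq_smul_t_one]

theorem hom_ext {W : ChainObj k f} {φ ψ : ChainHom (Mj hf_id hf_comp j) W}
    (h : φ.app j one = ψ.app j one) : φ = ψ := by
  ext i x
  rcases lt_or_ge i j with hi | hi
  · rw [eq_zero_of_lt hi x, map_zero, map_zero]
  · rw [app_eq_smul_t φ hi, app_eq_smul_t ψ hi, h]

def lift (W : ChainObj k f) (w : W.V j) : ChainHom (Mj hf_id hf_comp j) W where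
  app i :=
    { toFun := fun x => if h : j ≤ i then x.1 • W.t j i h w else 0
      map_add' := fun a b => by split_ifs <;> simp [add_smul]
      map_smul' := fun c a => by split_ifs <;> simp [mul_smul] }
  comm i i' h x := by
    by_cases hi : j ≤ i
    · simp [dif_pos hi, dif_pos (hi.trans h), W.t_comp]
    · simp [eq_zero_of_lt (not_le.mp hi) x]

theorem lift_app_one (W : ChainObj k f) (w : W.V j) :
    (lift (hf_id := hf_id) (hf_comp := hf_comp) W w).app j one = w := by
  simp [lift, W.t_id]

theorem bijective_app_one (W : ChainObj k f) :
    Function.Bijective fun φ : ChainHom (Mj hf_id hf_comp j) W => φ.app j one :=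
  ⟨fun _ _ => hom_ext, fun w => ⟨lift W w, lift_app_one W w⟩⟩

end Mj

/-- Hom computation: for `j ≤ j'`, `Hom_C(M^{j'}, M^j) ≅ k_{j'}` via `φ ↦ φ_{j'}(1)`. -/
theorem stmt15
    (hf_id : ∀ i (x : k i), f i i le_rfl x = x)
    (hf_comp : ∀ i j l (h₁ : i ≤ j) (h₂ : j ≤ l) (x : k i),
      f j l h₂ (f i j h₁ x) = f i l (h₁.trans h₂) x)
    (j j' : J) (hjj' : j ≤ j') :
    Function.Bijective
      (fun φ : ChainHom (Mj hf_id hf_comp j') (Mj hf_id hf_comp j) =>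
        ((φ.app j' ⟨1, one_mem_MjSub le_rfl⟩).1 : k j')) := by
  have hval : Function.Bijective (Subtype.val : MjSub k j j' → k j') :=
    ⟨Subtype.val_injective, fun c => ⟨⟨c, by simp [MjSub_eq_top hjj']⟩, rfl⟩⟩
  exact hval.comp (Mj.bijective_app_one _)
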